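/- (Birman–Schwinger principle for embedded eigenvalues.) Let m ≥ 0, let V ∈ ℓ¹(ℤ, ℂ^{2×2}), and let λ ∈ σ(D₀) \ {±m, ±√(m²+4)} be such that D_V ψ = λ ψ for some ψ ∈ H. Then φ := √W ψ ∈ H, and for every φ' ∈ H one has lim_{ε → 0⁺} ⟨φ', K(λ + iε) φ⟩_H = −⟨φ', φ⟩_H. -/

import Mathlib

open scoped ComplexOrder
open Matrix

noncomputable section

abbrev Mat2 : Type := Matrix (Fin 2) (Fin 2) ℂ
abbrev Vec2 : Type := EuclideanSpace ℂ (Fin 2)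
abbrev Hsp : Type := lp (fun _ : ℤ => Vec2) 2

/-- A `2×2` complex matrix acting on `ℂ²` as a continuous linear map. -/
def mAct (A : Mat2) : Vec2 →L[ℂ] Vec2 := Matrix.toEuclideanCLM (𝕜 := ℂ) A

/-- The spectral (operator) norm of a `2×2` complex matrix. -/
def specNorm (A : Mat2) : ℝ := ‖mAct A‖

/-- The Hilbert–Schmidt (Frobenius) norm of a `2×2` complex matrix. -/
def hsNorm (A : Mat2) : ℝ := Real.sqrt (∑ i, ∑ j, ‖A i j‖ ^ 2)

def bMat (m : ℝ) : Mat2 := !![(-m : ℂ), 1; 1, (m : ℂ)]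

def aMat : Mat2 := !![0, 0; -1, 0]

/-- `D0` is the free discrete Dirac operator with mass `m`. -/
def IsFreeDirac (m : ℝ) (D0 : Hsp →L[ℂ] Hsp) : Prop :=
  ∀ u : Hsp, ∀ n : ℤ,
    (D0 u) n = mAct aMat.transpose (u (n - 1)) + mAct (bMat m) (u n) + mAct aMat (u (n + 1))

/-- `Vop` is the block-diagonal operator with blocks `υ n`. -/
def IsBlockDiagOp (υ : ℤ → Mat2) (Vop : Hsp →L[ℂ] Hsp) : Prop :=
  ∀ u : Hsp, ∀ n : ℤ, (Vop u) n = mAct (υ n) (u n)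

/-- The spectrum `[−√(m²+4), −m] ∪ [m, √(m²+4)]` as a subset of `ℂ`. -/
def sigma0 (m : ℝ) : Set ℂ :=
  Complex.ofReal '' (Set.Icc (-Real.sqrt (m ^ 2 + 4)) (-m) ∪ Set.Icc m (Real.sqrt (m ^ 2 + 4)))

def T0mat (m : ℝ) (lam k : ℂ) : Mat2 :=
  (k⁻¹ - k)⁻¹ • !![lam - m, 1 - k; 1 - k, lam + m]

def T1mat (m : ℝ) (lam k : ℂ) : Mat2 :=
  (k * (k⁻¹ - k)⁻¹) • !![lam - m, 1 - k; 1 - k⁻¹, lam + m]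

def Tmat (m : ℝ) (lam k : ℂ) : ℤ → Mat2 := fun j =>
  if j = 0 then T0mat m lam k
  else if 0 < j then k ^ (j.toNat - 1) • T1mat m lam k
  else (k ^ ((-j).toNat - 1) • T1mat m lam k).transpose

/-- The positive semidefinite square root of a positive semidefinite matrix
(the definition `Matrix.PosSemidef.sqrt` of the older Mathlib, which is gone). -/
def psdSqrt {A : Mat2} (hA : A.PosSemidef) : Mat2 :=
  hA.1.eigenvectorUnitary.1 * diagonal ((↑) ∘ (√·) ∘ hA.1.eigenvalues) *
    (star hA.1.eigenvectorUnitary : Mat2)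

theorem psdSqrt_posSemidef {A : Mat2} (hA : A.PosSemidef) : (psdSqrt hA).PosSemidef := by
  have hd : (diagonal ((↑) ∘ (√·) ∘ hA.1.eigenvalues : Fin 2 → ℂ)).PosSemidef := by
    refine PosSemidef.diagonal fun i => ?_
    simp [Complex.zero_le_real, Real.sqrt_nonneg]
  have := hd.mul_mul_conjTranspose_same (hA.1.eigenvectorUnitary.1)
  unfold psdSqrt
  convert this using 2
  rfl

def wMat (υ : ℤ → Mat2) (n : ℤ) : Mat2 :=
  psdSqrt (Matrix.posSemidef_conjTranspose_mul_self (υ n))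

def sqrtwMat (υ : ℤ → Mat2) (n : ℤ) : Mat2 :=
  psdSqrt (psdSqrt_posSemidef (Matrix.posSemidef_conjTranspose_mul_self (υ n)))

/-- The Birman–Schwinger operator `K(z) = √W (D₀ − z)⁻¹ U √W`. -/
def Kop (D0 sW Uop : Hsp →L[ℂ] Hsp) (z : ℂ) : Hsp →L[ℂ] Hsp :=
  sW * Ring.inverse (D0 - z • (1 : Hsp →L[ℂ] Hsp)) * Uop * sW

/-- The element of `ℓ²(ℤ, ℂ²)` supported at site `j` equal to the `β`-th standard basis vector. -/
def deltaVec (j : ℤ) (β : Fin 2) : Hsp := lp.single 2 j (EuclideanSpace.single β (1 : ℂ))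


/-!
Since `U √W √W = V`, the eigenvalue equation `(D₀ + V) ψ = λ ψ` gives, for every non-real `z`,
`K(z) φ = -φ - √W ((z - λ) (D₀ - z)⁻¹ ψ)`. With `z = λ + iε` it remains to show that
`iε (D₀ - λ - iε)⁻¹ ψ → 0`. This holds for any self-adjoint operator and any real `λ` that is not
an eigenvalue: these operators have norm at most `1`, and they tend to `0` on the range of
`D₀ - λ`, which is dense because its orthogonal complement is the kernel of `D₀ - λ`.

That `λ` is not an eigenvalue of `D₀` comes from the transfer matrix of the eigenvalue recursion:
for `0 < λ² - m² < 4` it preserves a positive definite Hermitian form, so a solution that decays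
at `+∞` vanishes identically.
-/

open Complex Filter Topology

lemma ContinuousLinearMap.ringInverse_apply_apply {𝕜 M : Type*} [NontriviallyNormedField 𝕜]
    [NormedAddCommGroup M] [NormedSpace 𝕜 M] {A : M →L[𝕜] M} (hA : IsUnit A) (v : M) :
    Ring.inverse A (A v) = v := by
  rw [← mul_apply_eq_comp, Ring.inverse_mul_cancel _ hA, one_apply_eq_self]

namespace IsSelfAdjoint

variable {E : Type*} [NormedAddCommGroup E] [InnerProductSpace ℂ E] [CompleteSpace E]
  {T : E →L[ℂ] E}

lemma isUnit_sub_smul_one (hT : IsSelfAdjoint T) {z : ℂ} (hz : z.im ≠ 0) :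
    IsUnit (T - z • 1) := by
  have hz' : z ∉ spectrum ℂ T := fun h => hz (by rw [hT.mem_spectrum_eq_re h]; simp)
  rwa [spectrum.notMem_iff, Algebra.algebraMap_eq_smul_one, ← neg_sub, IsUnit.neg_iff] at hz'

lemma abs_im_mul_norm_le (hT : IsSelfAdjoint T) (z : ℂ) (v : E) :
    |z.im| * ‖v‖ ≤ ‖(T - z • 1) v‖ := by
  rcases (norm_nonneg v).eq_or_lt with hv | hv
  · simp [← hv]
  have him : (inner ℂ v ((T - z • 1) v)).im = -z.im * ‖v‖ ^ 2 := by
    have := (ContinuousLinearMap.isSelfAdjoint_iff_isSymmetric.mp hT).im_inner_self_apply v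
    simp only [_root_.sub_apply, _root_.smul_apply, one_apply_eq_self, inner_sub_right,
      inner_smul_right, inner_self_eq_norm_sq_to_K]
    simp_all [← ofReal_pow]
  refine le_of_mul_le_mul_right ?_ hv
  calc |z.im| * ‖v‖ * ‖v‖ = |(inner ℂ v ((T - z • 1) v)).im| := by
        rw [him, abs_mul, abs_neg, abs_pow, abs_norm]; ring
    _ ≤ ‖inner ℂ v ((T - z • 1) v)‖ := abs_im_le_norm _
    _ ≤ ‖(T - z • 1) v‖ * ‖v‖ := by rw [mul_comm]; exact norm_inner_le_norm _ _

lemma abs_im_mul_norm_inverse_le (hT : IsSelfAdjoint T) (z : ℂ) :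
    |z.im| * ‖Ring.inverse (T - z • 1)‖ ≤ 1 := by
  rcases eq_or_ne z.im 0 with hz | hz
  · simp [hz]
  have hpos : 0 < |z.im| := abs_pos.mpr hz
  rw [← le_div_iff₀' hpos]
  refine ContinuousLinearMap.opNorm_le_bound _ (by positivity) fun v => ?_
  have h := hT.abs_im_mul_norm_le z (Ring.inverse (T - z • 1) v)
  rw [← mul_apply_eq_comp, Ring.mul_inverse_cancel _ (hT.isUnit_sub_smul_one hz),
    one_apply_eq_self] at h
  rwa [div_mul_eq_mul_div, one_mul, le_div_iff₀' hpos]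

lemma dense_range_sub_smul_one (hT : IsSelfAdjoint T) (lam : ℝ)
    (hker : ∀ v, T v = (lam : ℂ) • v → v = 0) :
    Dense (Set.range ⇑(T - (lam : ℂ) • (1 : E →L[ℂ] E))) := by
  have hsa : IsSelfAdjoint (T - (lam : ℂ) • 1) :=
    hT.sub (IsSelfAdjoint.smul (Complex.conj_ofReal lam) (.one _))
  have hker' : LinearMap.ker ((T - (lam : ℂ) • 1 : E →L[ℂ] E) : E →ₗ[ℂ] E) = ⊥ := by
    refine LinearMap.ker_eq_bot'.mpr fun v hv => hker v ?_
    simpa [sub_eq_zero] using hv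
  have := (ContinuousLinearMap.isSelfAdjoint_iff_isSymmetric.mp hsa).orthogonal_range
  rwa [hker', ← Submodule.topologicalClosure_eq_top_iff,
    ← Submodule.dense_iff_topologicalClosure_eq_top] at this

theorem tendsto_smul_inverse_sub_smul_one (hT : IsSelfAdjoint T) (lam : ℝ)
    (hker : ∀ v, T v = (lam : ℂ) • v → v = 0) (ψ : E) :
    Tendsto (fun ε : ℝ => ((ε : ℂ) * I) • Ring.inverse (T - ((lam : ℂ) + ε * I) • 1) ψ)
      (𝓝[>] 0) (𝓝 0) := by
  set F : ℝ → E →L[ℂ] E := fun ε => ((ε : ℂ) * I) • Ring.inverse (T - ((lam : ℂ) + ε * I) • 1)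
  have hF : ∀ ε, ‖F ε‖ ≤ 1 := fun ε => by
    simpa [F, norm_smul] using hT.abs_im_mul_norm_inverse_le ((lam : ℂ) + ε * I)
  have hequi : Equicontinuous fun ε => ⇑(F ε) :=
    ((NormedSpace.equicontinuous_TFAE F).out 5 1).mp (⟨1, hF⟩ : ∃ C, ∀ ε, ‖F ε‖ ≤ C)
  have hclosed : IsClosed {v | Tendsto (F · v) (𝓝[>] 0) (𝓝 0)} :=
    hequi.isClosed_setOfPred_tendsto continuous_const
  suffices Set.range ⇑(T - (lam : ℂ) • (1 : E →L[ℂ] E)) ⊆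
      {v | Tendsto (F · v) (𝓝[>] 0) (𝓝 0)} by
    rw [← hclosed.closure_subset_iff, (hT.dense_range_sub_smul_one lam hker).closure_eq] at this
    exact this (Set.mem_univ ψ)
  rintro _ ⟨χ, rfl⟩
  have hF_range : ∀ ε : ℝ, ε ≠ 0 →
      F ε ((T - (lam : ℂ) • 1) χ) = ((ε : ℂ) * I) • (χ + F ε χ) := fun ε hε => by
    have hunit := hT.isUnit_sub_smul_one (z := (lam : ℂ) + ε * I) (by simpa using hε)
    have hsplit : (T - (lam : ℂ) • 1) χ =
        (T - ((lam : ℂ) + ε * I) • 1) χ + ((ε : ℂ) * I) • χ := by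
      simp only [_root_.sub_apply, _root_.smul_apply, one_apply_eq_self]
      module
    simp only [F, _root_.smul_apply, hsplit, map_add, map_smul,
      ContinuousLinearMap.ringInverse_apply_apply hunit, smul_add]
  have hbdd : IsBoundedUnder (· ≤ ·) (𝓝[>] 0) (fun ε => ‖χ + F ε χ‖) := by
    refine isBoundedUnder_of ⟨2 * ‖χ‖, fun ε => ?_⟩
    linarith [norm_add_le χ (F ε χ), (F ε).le_of_opNorm_le (hF ε) χ]
  have hεI : Tendsto (fun ε : ℝ => (ε : ℂ) * I) (𝓝[>] 0) (𝓝 0) := by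
    simpa using ((continuous_ofReal.tendsto 0).mul_const I).mono_left nhdsWithin_le_nhds
  refine (hεI.zero_smul_isBoundedUnder_le hbdd).congr' ?_
  filter_upwards [self_mem_nhdsWithin] with ε hε
  exact (hF_range ε (ne_of_gt hε)).symm

end IsSelfAdjoint

lemma lp.summable_norm_sq {ι : Type*} {E : ι → Type*} [∀ i, NormedAddCommGroup (E i)]
    (f : lp E 2) : Summable fun i => ‖f i‖ ^ 2 := by
  simpa using (lp.memℓp f).summable (by norm_num)

lemma lp.tendsto_norm_cofinite_zero {ι : Type*} {E : ι → Type*} [∀ i, NormedAddCommGroup (E i)]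
    (f : lp E 2) : Tendsto (fun i => ‖f i‖) cofinite (𝓝 0) := by
  simpa [Function.comp_def] using
    (Real.continuous_sqrt.tendsto 0).comp (lp.summable_norm_sq f).tendsto_cofinite_zero

lemma mAct_mul (A B : Mat2) (v : Vec2) : mAct (A * B) v = mAct A (mAct B v) := by
  simp [mAct, map_mul]

lemma inner_mAct_left (A : Mat2) (v w : Vec2) :
    inner ℂ (mAct A v) w = inner ℂ v (mAct Aᴴ w) := by
  rw [show mAct Aᴴ = ContinuousLinearMap.adjoint (mAct A) by
    rw [← ContinuousLinearMap.star_eq_adjoint]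
    simpa [mAct, Matrix.star_eq_conjTranspose] using map_star (toEuclideanCLM (𝕜 := ℂ)) A,
    ContinuousLinearMap.adjoint_inner_right]

lemma mAct_apply (A : Mat2) (v : Vec2) (i : Fin 2) :
    mAct A v i = A i 0 * v 0 + A i 1 * v 1 := by
  simp [mAct, Matrix.mulVec, dotProduct, Fin.sum_univ_two]

lemma summable_inner_mAct (A : Mat2) (x y : Hsp) (j k : ℤ) :
    Summable fun n => inner ℂ (x (n + j)) (mAct A (y (n + k))) := by
  have hshift : ∀ (z : Hsp) (j : ℤ), Summable fun n => ‖z (n + j)‖ ^ 2 := fun z j =>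
    (Equiv.addRight j).summable_iff.mpr (lp.summable_norm_sq z)
  refine .of_norm_bounded (((hshift x j).add (hshift y k)).mul_left ‖mAct A‖) fun n => ?_
  calc ‖inner ℂ (x (n + j)) (mAct A (y (n + k)))‖
      ≤ ‖x (n + j)‖ * (‖mAct A‖ * ‖y (n + k)‖) :=
        (norm_inner_le_norm _ _).trans (by gcongr; exact (mAct A).le_opNorm _)
    _ ≤ ‖mAct A‖ * (‖x (n + j)‖ ^ 2 + ‖y (n + k)‖ ^ 2) := by
        nlinarith [norm_nonneg (mAct A),
          mul_nonneg (norm_nonneg (mAct A)) (sq_nonneg (‖x (n + j)‖ - ‖y (n + k)‖))]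

lemma aMat_conjTranspose : aMatᴴ = aMatᵀ := by
  ext i j; fin_cases i <;> fin_cases j <;> simp [aMat]

lemma aMat_transpose_conjTranspose : aMatᵀᴴ = aMat := by
  ext i j; fin_cases i <;> fin_cases j <;> simp [aMat]

lemma bMat_conjTranspose (m : ℝ) : (bMat m)ᴴ = bMat m := by
  ext i j; fin_cases i <;> fin_cases j <;> simp [bMat]

lemma IsFreeDirac.isSelfAdjoint {m : ℝ} {D0 : Hsp →L[ℂ] Hsp} (hD0 : IsFreeDirac m D0) :
    IsSelfAdjoint D0 := by
  refine ContinuousLinearMap.isSelfAdjoint_iff_isSymmetric.mpr fun x y => ?_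
  let t (A : Mat2) (j k n : ℤ) : ℂ := inner ℂ (x (n + j)) (mAct A (y (n + k)))
  have hs (A : Mat2) (j k : ℤ) : Summable (t A j k) := summable_inner_mAct A x y j k
  have hshift (A : Mat2) (j k l : ℤ) : ∑' n, t A j k n = ∑' n, t A (l + j) (l + k) n := by
    rw [← (Equiv.addRight l).tsum_eq]
    simp only [t, Equiv.coe_addRight, add_assoc]
  calc inner ℂ (D0 x) y = ∑' n, (t aMat (-1) 0 n + t (bMat m) 0 0 n + t aMatᵀ 1 0 n) := by
        rw [lp.inner_eq_tsum]
        congr 1 with n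
        simp only [hD0 x n, inner_add_left, inner_mAct_left, aMat_transpose_conjTranspose,
          bMat_conjTranspose, aMat_conjTranspose, t, sub_eq_add_neg, add_zero]
    _ = ∑' n, t aMat (-1) 0 n + ∑' n, t (bMat m) 0 0 n + ∑' n, t aMatᵀ 1 0 n := by
        rw [((hs _ _ _).add (hs _ _ _)).tsum_add (hs _ _ _), (hs _ _ _).tsum_add (hs _ _ _)]
    _ = ∑' n, t aMatᵀ 0 (-1) n + ∑' n, t (bMat m) 0 0 n + ∑' n, t aMat 0 1 n := by
        rw [hshift aMat (-1) 0 1, hshift aMatᵀ 1 0 (-1)]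
        norm_num
        ring
    _ = ∑' n, (t aMatᵀ 0 (-1) n + t (bMat m) 0 0 n + t aMat 0 1 n) := by
        rw [((hs _ _ _).add (hs _ _ _)).tsum_add (hs _ _ _), (hs _ _ _).tsum_add (hs _ _ _)]
    _ = inner ℂ x (D0 y) := by
        rw [lp.inner_eq_tsum]
        congr 1 with n
        simp only [hD0 y n, inner_add_right, t, sub_eq_add_neg, add_zero]

lemma eq_zero_of_transfer_recurrence {a b : ℝ} (hab : 0 < a * b) (hab4 : a * b < 4)
    {x y : ℤ → ℂ} (hx : ∀ n, x (n + 1) = x n - a * y n)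
    (hy : ∀ n, y (n + 1) = y n + b * x (n + 1))
    (hx0 : Tendsto x atTop (𝓝 0)) (hy0 : Tendsto y atTop (𝓝 0)) (n : ℤ) :
    x n = 0 ∧ y n = 0 := by
  have hb : b ≠ 0 := by rintro rfl; simp at hab
  have hc : 0 < a * b * (1 - a * b / 4) := mul_pos hab (by linarith)
  -- `b` times the form `b |x|² + a |y|² - a b Re (x̄ y)` preserved by the transfer matrix
  let Q (n : ℤ) : ℝ :=
    b ^ 2 * normSq (x n - (a / 2 : ℝ) * y n) + a * b * (1 - a * b / 4) * normSq (y n)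
  have hQ_succ (n : ℤ) : Q (n + 1) = Q n := by
    simp only [Q, hy n, hx n, normSq_apply, sub_re, sub_im, add_re, add_im, mul_re, mul_im,
      ofReal_re, ofReal_im]
    ring
  have hQ_const (n : ℤ) : Q n = Q 0 := by
    induction n using Int.induction_on with
    | zero => rfl
    | succ k hk => rw [hQ_succ, hk]
    | pred k hk => rw [← hk, ← hQ_succ, sub_add_cancel]
  have hQ_lim : Tendsto Q atTop (𝓝 0) := by
    have h1 := (continuous_normSq.tendsto _).comp (hx0.sub (hy0.const_mul ((a / 2 : ℝ) : ℂ)))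
    have h2 := (continuous_normSq.tendsto _).comp hy0
    simpa [Q, Function.comp_def] using (h1.const_mul (b ^ 2)).add (h2.const_mul _)
  have hQ : Q n = 0 := (hQ_const n).trans <|
    tendsto_nhds_unique (tendsto_const_nhds.congr fun k => (hQ_const k).symm) hQ_lim
  simp only [Q] at hQ
  have hN1 := normSq_nonneg (x n - (a / 2 : ℝ) * y n)
  have hN2 := normSq_nonneg (y n)
  have hb2 : 0 < b ^ 2 := by positivity
  have hyn : y n = 0 := normSq_eq_zero.mp (by nlinarith)
  refine ⟨?_, hyn⟩
  simpa [hyn] using normSq_eq_zero.mp (show normSq (x n - (a / 2 : ℝ) * y n) = 0 by nlinarith)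

lemma IsFreeDirac.eq_zero_of_apply_eq_smul {m : ℝ} {D0 : Hsp →L[ℂ] Hsp}
    (hD0 : IsFreeDirac m D0) {lam : ℝ} (h0 : 0 < lam ^ 2 - m ^ 2) (h4 : lam ^ 2 - m ^ 2 < 4)
    {χ : Hsp} (hχ : D0 χ = (lam : ℂ) • χ) : χ = 0 := by
  have hrow (n : ℤ) (i : Fin 2) : (D0 χ) n i = lam * χ n i := by rw [hχ]; rfl
  have hx (n : ℤ) : χ (n + 1) 0 = χ n 0 - ((lam - m : ℝ) : ℂ) * χ n 1 := by
    have h := hrow n 1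
    simp [hD0 χ n, mAct_apply, aMat, bMat] at h
    push_cast
    linear_combination -h
  have hy (n : ℤ) : χ (n + 1) 1 = χ n 1 + ((lam + m : ℝ) : ℂ) * χ (n + 1) 0 := by
    have h := hrow (n + 1) 0
    simp [hD0 χ (n + 1), mAct_apply, aMat, bMat] at h
    push_cast
    linear_combination h
  have hdecay (i : Fin 2) : Tendsto (fun n => χ n i) atTop (𝓝 0) :=
    squeeze_zero_norm (fun n => PiLp.norm_apply_le (χ n) i)
      ((lp.tendsto_norm_cofinite_zero χ).mono_left atTop_le_cofinite)
  have hzero := eq_zero_of_transfer_recurrence (by nlinarith) (by nlinarith) hx hy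
    (hdecay 0) (hdecay 1)
  ext n i
  fin_cases i
  exacts [(hzero n).1, (hzero n).2]

lemma sq_sub_sq_mem_Ioo_of_mem_sigma0 {m lam : ℝ} (hm : 0 ≤ m) (hlam : (lam : ℂ) ∈ sigma0 m)
    (h1 : lam ≠ m) (h2 : lam ≠ -m) (h3 : lam ≠ √(m ^ 2 + 4)) (h4 : lam ≠ -√(m ^ 2 + 4)) :
    0 < lam ^ 2 - m ^ 2 ∧ lam ^ 2 - m ^ 2 < 4 := by
  obtain ⟨r, hr, hrlam⟩ := hlam
  obtain rfl : r = lam := ofReal_injective hrlam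
  have hs : √(m ^ 2 + 4) ^ 2 = m ^ 2 + 4 := Real.sq_sqrt (by positivity)
  have hs0 : 0 ≤ √(m ^ 2 + 4) := Real.sqrt_nonneg _
  rcases hr with ⟨hlo, hhi⟩ | ⟨hlo, hhi⟩
  · have := lt_of_le_of_ne hlo h4.symm
    have := lt_of_le_of_ne hhi h2
    constructor <;> nlinarith
  · have := lt_of_le_of_ne hlo h1.symm
    have := lt_of_le_of_ne hhi h3
    constructor <;> nlinarith

theorem psdSqrt_mul_self {A : Mat2} (hA : A.PosSemidef) : psdSqrt hA * psdSqrt hA = A := by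
  have hU : (star hA.1.eigenvectorUnitary : Mat2) * hA.1.eigenvectorUnitary.1 = 1 := by simp
  conv_rhs => rw [hA.1.spectral_theorem, Unitary.conjStarAlgAut_apply]
  rw [psdSqrt, show ∀ a b c d e f : Mat2, a * b * c * (d * e * f) = a * (b * (c * d) * e) * f from
    fun a b c d e f => by simp only [mul_assoc], hU, mul_one, diagonal_mul_diagonal]
  congr 3 with i
  simp [← ofReal_mul, Real.mul_self_sqrt (hA.eigenvalues_nonneg i)]

lemma sqrtwMat_mul_self (υ : ℤ → Mat2) (n : ℤ) : sqrtwMat υ n * sqrtwMat υ n = wMat υ n :=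
  psdSqrt_mul_self _

lemma IsBlockDiagOp.mul {υ υ' : ℤ → Mat2} {A B : Hsp →L[ℂ] Hsp} (hA : IsBlockDiagOp υ A)
    (hB : IsBlockDiagOp υ' B) : IsBlockDiagOp (υ * υ') (A * B) := fun u n => by
  rw [mul_apply_eq_comp, hA, hB, Pi.mul_apply, mAct_mul]

lemma IsBlockDiagOp.unique {υ : ℤ → Mat2} {A B : Hsp →L[ℂ] Hsp} (hA : IsBlockDiagOp υ A)
    (hB : IsBlockDiagOp υ B) : A = B :=
  ContinuousLinearMap.ext fun u => lp.ext <| funext fun n => by rw [hA, hB]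

lemma Kop_apply_of_apply_eq_smul {D0 Vop sW Uop : Hsp →L[ℂ] Hsp} (hUV : Uop * sW * sW = Vop)
    {lam z : ℂ} {ψ : Hsp} (heig : (D0 + Vop) ψ = lam • ψ) (hz : IsUnit (D0 - z • 1)) :
    Kop D0 sW Uop z (sW ψ) = -sW ψ - sW ((z - lam) • Ring.inverse (D0 - z • 1) ψ) := by
  have hV : Vop ψ = -(D0 - z • 1) ψ - (z - lam) • ψ := by
    rw [_root_.add_apply] at heig
    simp only [_root_.sub_apply, _root_.smul_apply, one_apply_eq_self]
    linear_combination (norm := module) heig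
  calc Kop D0 sW Uop z (sW ψ) = sW (Ring.inverse (D0 - z • 1) ((Uop * sW * sW) ψ)) := rfl
    _ = _ := by
      rw [hUV, hV, map_sub, map_neg, map_smul, ContinuousLinearMap.ringInverse_apply_apply hz,
        map_sub, map_neg]

theorem stmt11_general (m : ℝ) (hm : 0 ≤ m) (υ u : ℤ → Mat2)
    (hpolar : ∀ n, υ n = u n * wMat υ n)
    (D0 Vop sW Uop : Hsp →L[ℂ] Hsp)
    (hD0 : IsFreeDirac m D0) (hVop : IsBlockDiagOp υ Vop)
    (hsW : IsBlockDiagOp (sqrtwMat υ) sW) (hU : IsBlockDiagOp u Uop)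
    (lam : ℝ) (hlam : (lam : ℂ) ∈ sigma0 m)
    (hlam1 : lam ≠ m) (hlam2 : lam ≠ -m)
    (hlam3 : lam ≠ Real.sqrt (m ^ 2 + 4)) (hlam4 : lam ≠ -Real.sqrt (m ^ 2 + 4))
    (ψ : Hsp) (heig : (D0 + Vop) ψ = ((lam : ℂ)) • ψ)
    (φ' : Hsp) :
    Filter.Tendsto
      (fun ε : ℝ =>
        inner (𝕜 := ℂ) φ' (Kop D0 sW Uop ((lam : ℂ) + ε * Complex.I) (sW ψ)))
      (nhdsWithin 0 (Set.Ioi 0))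
      (nhds (-(inner (𝕜 := ℂ) φ' (sW ψ) : ℂ))) := by
  have hsa := hD0.isSelfAdjoint
  obtain ⟨h0, h4⟩ := sq_sub_sq_mem_Ioo_of_mem_sigma0 hm hlam hlam1 hlam2 hlam3 hlam4
  have hblocks : u * sqrtwMat υ * sqrtwMat υ = υ := funext fun n => by
    rw [Pi.mul_apply, Pi.mul_apply, mul_assoc, sqrtwMat_mul_self, ← hpolar]
  have hUV : Uop * sW * sW = Vop := ((hU.mul hsW).mul hsW).unique (by rwa [hblocks])
  have hres := hsa.tendsto_smul_inverse_sub_smul_one lam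
    (fun χ => hD0.eq_zero_of_apply_eq_smul h0 h4) ψ
  have hlim := (tendsto_const_nhds (x := φ')).inner (𝕜 := ℂ)
    ((sW.continuous.tendsto 0).comp hres)
  rw [map_zero, inner_zero_right] at hlim
  refine (sub_zero (-inner ℂ φ' (sW ψ)) ▸ tendsto_const_nhds.sub hlim).congr' ?_
  filter_upwards [self_mem_nhdsWithin] with ε hε
  rw [Kop_apply_of_apply_eq_smul hUV heig (hsa.isUnit_sub_smul_one (by simpa using hε.ne')),
    add_sub_cancel_left, inner_sub_right, inner_neg_right]
  rfl

/-- Birman–Schwinger principle for embedded eigenvalues: if `λ ∈ σ(D₀)` is not one of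
the endpoints `±m, ±√(m²+4)` and `D_V ψ = λψ`, then `φ = √W ψ ∈ H` and
`lim_{ε→0⁺} ⟨φ', K(λ+iε)φ⟩ = −⟨φ', φ⟩` for all `φ' ∈ H`. -/
theorem stmt11 (m : ℝ) (hm : 0 ≤ m) (υ u : ℤ → Mat2)
    (hsum : Summable fun n => specNorm (υ n))
    (hpolar : ∀ n, υ n = u n * wMat υ n) (hu : ∀ n, specNorm (u n) ≤ 1)
    (D0 Vop sW Uop : Hsp →L[ℂ] Hsp)
    (hD0 : IsFreeDirac m D0) (hVop : IsBlockDiagOp υ Vop)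
    (hsW : IsBlockDiagOp (sqrtwMat υ) sW) (hU : IsBlockDiagOp u Uop)
    (hspec : spectrum ℂ D0 = sigma0 m)
    (lam : ℝ) (hlam : (lam : ℂ) ∈ sigma0 m)
    (hlam1 : lam ≠ m) (hlam2 : lam ≠ -m)
    (hlam3 : lam ≠ Real.sqrt (m ^ 2 + 4)) (hlam4 : lam ≠ -Real.sqrt (m ^ 2 + 4))
    (ψ : Hsp) (heig : (D0 + Vop) ψ = ((lam : ℂ)) • ψ)
    (φ' : Hsp) :
    Filter.Tendsto
      (fun ε : ℝ =>
        inner (𝕜 := ℂ) φ' (Kop D0 sW Uop ((lam : ℂ) + ε * Complex.I) (sW ψ)))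
      (nhdsWithin 0 (Set.Ioi 0))
      (nhds (-(inner (𝕜 := ℂ) φ' (sW ψ) : ℂ))) :=
  stmt11_general m hm υ u hpolar D0 Vop sW Uop hD0 hVop hsW hU lam hlam hlam1 hlam2 hlam3 hlam4 ψ
    heig φ'
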